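/- arXiv:2203.17041 — 8 statements merged into one kernel-verified Lean document; each statement's English description precedes it below -/
import Mathlib

section
/- Let G = (V,E) be a finite simple graph with no isolated vertices, let Γ_G = (N,γ) be the independent set game on G, and let {x_S}_{S ⊆ N, S ≠ ∅} be a population monotonic allocation scheme of Γ_G. If I is a maximum independent set of G, then for every vertex v ∈ I one has ∑_{i ∈ δ(v)} x_{N,i} = γ(δ(v)) = 1, where δ(v) denotes the set of edges of G incident to v. -/
open Finset

variable {V : Type*} [Fintype V] [DecidableEq V]

/-- `I` is an independent set of the graph `G`. -/
def Indep (G : SimpleGraph V) (I : Finset V) : Prop :=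
  ∀ u ∈ I, ∀ v ∈ I, ¬ G.Adj u v

/-- The independence number of `G` restricted to the vertex set `U`,
i.e. `α(G[U])`: the maximum size of an independent set contained in `U`. -/
noncomputable def alphaOn (G : SimpleGraph V) (U : Set V) : ℕ :=
  sSup {n : ℕ | ∃ I : Finset V, ↑I ⊆ U ∧ Indep G I ∧ I.card = n}

/-- `δ(v)`: the set of edges of `G` incident to the vertex `v`. -/
def incEdges (G : SimpleGraph V) (v : V) : Set (Sym2 V) :=
  {e | e ∈ G.edgeSet ∧ v ∈ e}

/-- `δ(v)` as a finset. -/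
def incFinset (G : SimpleGraph V) [DecidableRel G.Adj] (v : V) : Finset (Sym2 V) :=
  G.edgeFinset.filter (fun e => v ∈ e)

/-- `V⟨S⟩`: the set of vertices of `G` all of whose incident edges lie in `S`. -/
def onlyInc (G : SimpleGraph V) (S : Set (Sym2 V)) : Set V :=
  {v | incEdges G v ⊆ S}

/-- The characteristic function of the independent set game on `G`:
`γ(S) = α(G[V⟨S⟩])`. -/
noncomputable def gammaIS (G : SimpleGraph V) (S : Finset (Sym2 V)) : ℕ :=
  alphaOn G (onlyInc G ↑S)

/-- `x` is a population monotonic allocation scheme (PMAS) of the independent set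
game on `G`: it is nonnegative, efficient, and monotone.  Coalitions are the
nonempty subsets of the player set `N = E(G)` (`G.edgeFinset`). -/
def IsPMAS (G : SimpleGraph V) [DecidableRel G.Adj]
    (x : Finset (Sym2 V) → Sym2 V → ℝ) : Prop :=
  (∀ S ⊆ G.edgeFinset, ∀ i ∈ S, 0 ≤ x S i) ∧
  (∀ S ⊆ G.edgeFinset, S.Nonempty → ∑ i ∈ S, x S i = (gammaIS G S : ℝ)) ∧
  (∀ S T : Finset (Sym2 V), S ⊆ T → T ⊆ G.edgeFinset → S.Nonempty →
    ∀ i ∈ S, x S i ≤ x T i)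

/-- An edge of `G` is pendant if one of its endpoints has degree one. -/
def PendantEdge (G : SimpleGraph V) [DecidableRel G.Adj] (e : Sym2 V) : Prop :=
  e ∈ G.edgeSet ∧ ∃ v ∈ e, G.degree v = 1

/-- A non-pendant edge of type I: not incident to any pendant edge. -/
def TypeI (G : SimpleGraph V) [DecidableRel G.Adj] (e : Sym2 V) : Prop :=
  e ∈ G.edgeSet ∧ ¬ PendantEdge G e ∧
    ∀ f : Sym2 V, PendantEdge G f → ¬ ∃ w : V, w ∈ e ∧ w ∈ f

/-- A non-pendant edge of type II: incident to some pendant edge. -/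
def TypeII (G : SimpleGraph V) [DecidableRel G.Adj] (e : Sym2 V) : Prop :=
  e ∈ G.edgeSet ∧ ¬ PendantEdge G e ∧
    ∃ f : Sym2 V, PendantEdge G f ∧ ∃ w : V, w ∈ e ∧ w ∈ f

/-- The vertex `v` has distance at most two to some pendant vertex of `G`. -/
def NearPendant (G : SimpleGraph V) [DecidableRel G.Adj] (v : V) : Prop :=
  ∃ p : V, G.degree p = 1 ∧ ∃ w : G.Walk v p, w.length ≤ 2

section Aux

variable (G : SimpleGraph V) [DecidableRel G.Adj]

lemma mem_incFinset' {v : V} {e : Sym2 V} :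
    e ∈ incFinset G v ↔ e ∈ G.edgeSet ∧ v ∈ e := by
  unfold incFinset
  rw [Finset.mem_filter, SimpleGraph.mem_edgeFinset]

lemma exists_adj {u : V} (h : G.degree u ≠ 0) : ∃ z, G.Adj u z := by
  have h' : (G.neighborFinset u).Nonempty :=
    Finset.card_pos.mp (Nat.pos_of_ne_zero h)
  obtain ⟨z, hz⟩ := h'
  exact ⟨z, by simpa using hz⟩

lemma adj_of_onlyInc {u v : V} (hdeg : G.degree u ≠ 0)
    (hu : u ∈ onlyInc G ↑(incFinset G v)) (hne : u ≠ v) :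
    G.Adj u v ∧ ∀ z, G.Adj u z → z = v := by
  have key : ∀ z, G.Adj u z → z = v := by
    intro z hz
    have he : s(u, z) ∈ incEdges G u := ⟨by simpa using hz, by simp⟩
    have h2 := hu he
    rw [Finset.mem_coe, mem_incFinset'] at h2
    rcases Sym2.mem_iff.mp h2.2 with h | h
    · exact absurd h.symm hne
    · exact h.symm
  obtain ⟨z, hz⟩ := exists_adj G hdeg
  have := key z hz
  subst this
  exact ⟨hz, key⟩

lemma alphaOn_eq_of {U : Set V} {m : ℕ}
    (hmem : ∃ J : Finset V, ↑J ⊆ U ∧ Indep G J ∧ J.card = m)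
    (hub : ∀ n, (∃ J : Finset V, ↑J ⊆ U ∧ Indep G J ∧ J.card = n) → n ≤ m) :
    alphaOn G U = m := by
  apply le_antisymm
  · exact csSup_le ⟨m, hmem⟩ fun n hn => hub n hn
  · exact le_csSup ⟨m, fun n hn => hub n hn⟩ hmem

lemma gamma_delta (hiso : ∀ v : V, G.degree v ≠ 0)
    {I : Finset V} (hI : Indep G I)
    (hImax : ∀ J : Finset V, Indep G J → J.card ≤ I.card)
    {v : V} (hv : v ∈ I) :
    gammaIS G (incFinset G v) = 1 := by
  unfold gammaIS
  apply alphaOn_eq_of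
  · refine ⟨{v}, ?_, ?_, by simp⟩
    · intro u hu
      simp only [Finset.coe_singleton, Set.mem_singleton_iff] at hu
      subst hu
      intro e he
      rw [Finset.mem_coe, mem_incFinset']
      exact he
    · intro a ha b hb
      simp only [Finset.mem_singleton] at ha hb
      subst ha; subst hb
      exact G.irrefl
  · rintro n ⟨J, hJsub, hJind, rfl⟩
    by_contra hcon
    push_neg at hcon
    obtain ⟨a, ha, b, hb, hab⟩ := Finset.one_lt_card.mp hcon
    -- first rule out `v ∈ J` in the sense: no element of J distinct from v can exist
    have core : ∀ u ∈ J, u ≠ v → G.Adj u v ∧ ∀ z, G.Adj u z → z = v := by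
      intro u hu hne
      exact adj_of_onlyInc G (hiso u) (hJsub hu) hne
    by_cases hvJ : v ∈ J
    · -- some element of J differs from v
      obtain ⟨u, hu, hune⟩ : ∃ u ∈ J, u ≠ v := by
        rcases eq_or_ne a v with rfl | hav
        · exact ⟨b, hb, fun h => hab h.symm⟩
        · exact ⟨a, ha, hav⟩
      exact hJind u hu v hvJ (core u hu hune).1
    · have hav : a ≠ v := fun h => hvJ (h ▸ ha)
      have hbv : b ≠ v := fun h => hvJ (h ▸ hb)
      obtain ⟨haadj, haonly⟩ := core a ha hav
      obtain ⟨hbadj, hbonly⟩ := core b hb hbv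
      have haI : a ∉ I := fun h => hI a h v hv haadj
      have hbI : b ∉ I := fun h => hI b h v hv hbadj
      set K : Finset V := insert a (insert b (I.erase v)) with hK
      have hKind : Indep G K := by
        intro p hp q hq hpq
        simp only [hK, Finset.mem_insert, Finset.mem_erase] at hp hq
        have herase : ∀ w, w ≠ v ∧ w ∈ I → ¬ G.Adj a w ∧ ¬ G.Adj b w := by
          intro w hw
          exact ⟨fun h => hw.1 (haonly w h), fun h => hw.1 (hbonly w h)⟩
        rcases hp with rfl | rfl | hp
        · rcases hq with rfl | rfl | hq
          · exact G.irrefl hpq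
          · exact hbv (haonly q hpq)
          · exact (herase q hq).1 hpq
        · rcases hq with rfl | rfl | hq
          · exact hav (hbonly q hpq)
          · exact G.irrefl hpq
          · exact (herase q hq).2 hpq
        · rcases hq with rfl | rfl | hq
          · exact (herase p hp).1 hpq.symm
          · exact (herase p hp).2 hpq.symm
          · exact hI p hp.2 q hq.2 hpq
      have hKcard : K.card = I.card + 1 := by
        have hanm : a ∉ insert b (I.erase v) := by
          simp only [Finset.mem_insert, Finset.mem_erase, not_or]
          exact ⟨hab, fun h => haI h.2⟩
        have hbnm : b ∉ I.erase v := by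
          simp only [Finset.mem_erase, not_and]
          exact fun _ h => hbI h
        rw [hK, Finset.card_insert_of_notMem hanm, Finset.card_insert_of_notMem hbnm,
          Finset.card_erase_of_mem hv]
        have : 1 ≤ I.card := Finset.card_pos.mpr ⟨v, hv⟩
        omega
      have := hImax K hKind
      omega

lemma gamma_full {I : Finset V} (hI : Indep G I)
    (hImax : ∀ J : Finset V, Indep G J → J.card ≤ I.card) :
    gammaIS G G.edgeFinset = I.card := by
  unfold gammaIS
  apply alphaOn_eq_of
  · refine ⟨I, ?_, hI, rfl⟩
    intro u _ e he
    rw [Finset.mem_coe, SimpleGraph.mem_edgeFinset]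
    exact he.1
  · rintro n ⟨J, _, hJ, rfl⟩
    exact hImax J hJ

lemma incFinset_disjoint {I : Finset V} (hI : Indep G I)
    {v w : V} (hv : v ∈ I) (hw : w ∈ I) (hvw : v ≠ w) :
    Disjoint (incFinset G v) (incFinset G w) := by
  rw [Finset.disjoint_left]
  intro e hev hew
  rw [mem_incFinset'] at hev hew
  have : e = s(v, w) := ((Sym2.mem_and_mem_iff hvw).mp ⟨hev.2, hew.2⟩)
  subst this
  exact hI v hv w hw (G.mem_edgeSet.mp hev.1)

end Aux

/-- Lemma 1 of the paper.  If `x` is a PMAS of the independent set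
game on `G` (a graph with no isolated vertices) and `I` is a maximum independent set
of `G`, then for every `v ∈ I`, `∑_{i ∈ δ(v)} x_{N,i} = γ(δ(v)) = 1`. -/
theorem stmt_0 (G : SimpleGraph V) [DecidableRel G.Adj]
    (hiso : ∀ v : V, G.degree v ≠ 0)
    (x : Finset (Sym2 V) → Sym2 V → ℝ) (hx : IsPMAS G x)
    (I : Finset V) (hI : Indep G I)
    (hImax : ∀ J : Finset V, Indep G J → J.card ≤ I.card) :
    ∀ v ∈ I,
      (∑ i ∈ incFinset G v, x G.edgeFinset i = (gammaIS G (incFinset G v) : ℝ)) ∧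
      gammaIS G (incFinset G v) = 1 := by
  obtain ⟨hnn, heff, hmono⟩ := hx
  have hsub : ∀ v : V, incFinset G v ⊆ G.edgeFinset := fun v => Finset.filter_subset _ _
  have hne : ∀ v : V, (incFinset G v).Nonempty := by
    intro v
    obtain ⟨z, hz⟩ := exists_adj G (hiso v)
    exact ⟨s(v, z), (mem_incFinset' G).mpr ⟨by simpa using hz, by simp⟩⟩
  have hγδ : ∀ v ∈ I, gammaIS G (incFinset G v) = 1 :=
    fun v hv => gamma_delta G hiso hI hImax hv
  -- each coalition sum is at least 1
  have hge : ∀ v ∈ I, (1 : ℝ) ≤ ∑ i ∈ incFinset G v, x G.edgeFinset i := by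
    intro v hv
    have h1 := heff (incFinset G v) (hsub v) (hne v)
    rw [hγδ v hv] at h1
    push_cast at h1
    calc (1 : ℝ) = ∑ i ∈ incFinset G v, x (incFinset G v) i := h1.symm
      _ ≤ ∑ i ∈ incFinset G v, x G.edgeFinset i :=
        Finset.sum_le_sum fun i hi =>
          hmono (incFinset G v) G.edgeFinset (hsub v) (subset_refl _) (hne v) i hi
  intro v hv
  refine ⟨?_, hγδ v hv⟩
  rw [hγδ v hv]
  push_cast
  refine le_antisymm ?_ (hge v hv)
  -- the total sum over N equals |I|
  have hNne : G.edgeFinset.Nonempty := ((hne v).mono (hsub v))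
  have htotN : ∑ i ∈ G.edgeFinset, x G.edgeFinset i = (I.card : ℝ) := by
    rw [heff G.edgeFinset (subset_refl _) hNne, gamma_full G hI hImax]
  -- sum over I of coalition sums is at most |I|
  have hdisj : (↑I : Set V).PairwiseDisjoint (fun v => incFinset G v) := by
    intro p hp q hq hpq
    exact incFinset_disjoint G hI hp hq hpq
  have hbi : I.biUnion (fun v => incFinset G v) ⊆ G.edgeFinset := by
    intro e he
    obtain ⟨w, _, hw⟩ := Finset.mem_biUnion.mp he
    exact hsub w hw
  have hIsum : ∑ w ∈ I, ∑ i ∈ incFinset G w, x G.edgeFinset i ≤ (I.card : ℝ) := by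
    rw [← Finset.sum_biUnion hdisj, ← htotN]
    exact Finset.sum_le_sum_of_subset_of_nonneg hbi
      (fun i hi _ => hnn G.edgeFinset (subset_refl _) i hi)
  -- isolate the summand at v
  have hsplit : ∑ i ∈ incFinset G v, x G.edgeFinset i
      + ∑ w ∈ I.erase v, ∑ i ∈ incFinset G w, x G.edgeFinset i
      = ∑ w ∈ I, ∑ i ∈ incFinset G w, x G.edgeFinset i :=
    Finset.add_sum_erase I (fun w => ∑ i ∈ incFinset G w, x G.edgeFinset i) hv
  have herase_ge : ((I.erase v).card : ℝ)
      ≤ ∑ w ∈ I.erase v, ∑ i ∈ incFinset G w, x G.edgeFinset i := by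
    have := Finset.card_nsmul_le_sum (I.erase v)
      (fun w => ∑ i ∈ incFinset G w, x G.edgeFinset i) 1
      (fun w hw => hge w (Finset.mem_of_mem_erase hw))
    simpa using this
  have hcarde : ((I.erase v).card : ℝ) = (I.card : ℝ) - 1 := by
    rw [Finset.card_erase_of_mem hv]
    have : 1 ≤ I.card := Finset.card_pos.mpr ⟨v, hv⟩
    push_cast [Nat.cast_sub this]
    ring
  linarith
end

section
/- Let G = (V,E) be a finite simple graph with no isolated vertices, let Γ_G = (N,γ) be the independent set game on G, and let {x_S}_{S ⊆ N, S ≠ ∅} be a population monotonic allocation scheme of Γ_G. Then 0 ≤ x_{S,i} ≤ 1 for every nonempty S ⊆ N and every i ∈ S. -/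
open Finset

variable {V : Type*} [Fintype V] [DecidableEq V]

lemma alphaOn_bddAbove (G : SimpleGraph V) (U : Set V) :
    BddAbove {n : ℕ | ∃ I : Finset V, ↑I ⊆ U ∧ Indep G I ∧ I.card = n} := by
  refine ⟨Fintype.card V, ?_⟩
  rintro n ⟨I, -, -, rfl⟩
  exact I.card_le_univ.trans (le_of_eq Finset.card_univ)

lemma alphaOn_spec (G : SimpleGraph V) (U : Set V) :
    ∃ I : Finset V, ↑I ⊆ U ∧ Indep G I ∧ I.card = alphaOn G U := by
  have hne : {n : ℕ | ∃ I : Finset V, ↑I ⊆ U ∧ Indep G I ∧ I.card = n}.Nonempty :=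
    ⟨0, ∅, by simp [Indep]⟩
  exact Nat.sSup_mem hne (alphaOn_bddAbove G U)

lemma le_alphaOn (G : SimpleGraph V) (U : Set V) (I : Finset V)
    (hI : ↑I ⊆ U) (hind : Indep G I) : I.card ≤ alphaOn G U :=
  le_csSup (alphaOn_bddAbove G U) ⟨I, hI, hind, rfl⟩

lemma gammaIS_singleton_le_one (G : SimpleGraph V) [DecidableRel G.Adj]
    (hiso : ∀ v : V, G.degree v ≠ 0) (i : Sym2 V) (hi : i ∈ G.edgeSet) :
    gammaIS G {i} ≤ 1 := by
  obtain ⟨I, hIsub, hind, hcard⟩ := alphaOn_spec G (onlyInc G ↑({i} : Finset (Sym2 V)))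
  rw [gammaIS, ← hcard]
  induction i using Sym2.ind with
  | _ u v =>
    have hadj : G.Adj u v := hi
    have hmem : ∀ w ∈ I, w = u ∨ w = v := by
      intro w hw
      have hw' : incEdges G w ⊆ ↑({s(u, v)} : Finset (Sym2 V)) := hIsub hw
      have hdeg := hiso w
      rw [← SimpleGraph.card_neighborFinset_eq_degree] at hdeg
      obtain ⟨z, hz⟩ := Finset.card_ne_zero.mp hdeg
      have hzadj : G.Adj w z := (SimpleGraph.mem_neighborFinset G w z).mp hz
      have he : s(w, z) ∈ incEdges G w := ⟨hzadj, Sym2.mem_mk_left w z⟩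
      have := hw' he
      simp only [Finset.coe_singleton, Set.mem_singleton_iff] at this
      have hwmem : w ∈ s(u, v) := this ▸ Sym2.mem_mk_left w z
      exact Sym2.mem_iff.mp hwmem
    refine Finset.card_le_one.mpr (fun a ha b hb => ?_)
    rcases hmem a ha with rfl | rfl <;> rcases hmem b hb with rfl | rfl
    · rfl
    · exact absurd hadj (hind a ha b hb)
    · exact absurd hadj (hind b hb a ha)
    · rfl

lemma gammaIS_le_erase_add_one (G : SimpleGraph V) [DecidableRel G.Adj]
    (S : Finset (Sym2 V)) (i : Sym2 V) (hi : i ∈ G.edgeSet) :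
    gammaIS G S ≤ gammaIS G (S.erase i) + 1 := by
  obtain ⟨I, hIsub, hind, hcard⟩ := alphaOn_spec G (onlyInc G ↑S)
  induction i using Sym2.ind with
  | _ u v =>
    have hadj : G.Adj u v := hi
    set J := (I.erase u).erase v with hJdef
    have hJI : J ⊆ I := (Finset.erase_subset _ _).trans (Finset.erase_subset _ _)
    have hJsub : ↑J ⊆ onlyInc G ↑(S.erase s(u, v)) := by
      intro w hw
      have hwJ : w ∈ J := hw
      have hwv : w ≠ v := (Finset.mem_erase.mp hwJ).1
      have hwu : w ≠ u := (Finset.mem_erase.mp (Finset.mem_erase.mp hwJ).2).1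
      have hwI : w ∈ I := hJI hwJ
      have hwS : incEdges G w ⊆ ↑S := hIsub hwI
      intro e he
      have heS : e ∈ S := hwS he
      have hne : e ≠ s(u, v) := by
        rintro rfl
        rcases Sym2.mem_iff.mp he.2 with rfl | rfl
        · exact hwu rfl
        · exact hwv rfl
      exact Finset.mem_coe.mpr (Finset.mem_erase.mpr ⟨hne, heS⟩)
    have hJind : Indep G J := fun a ha b hb => hind a (hJI ha) b (hJI hb)
    have hle := le_alphaOn G _ J hJsub hJind
    have hcardJ : I.card ≤ J.card + 1 := by
      by_cases hu : u ∈ I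
      · have hv : v ∉ I := fun hv => hind u hu v hv hadj
        have : J = I.erase u := by
          rw [hJdef, Finset.erase_eq_of_notMem (fun h => hv (Finset.mem_erase.mp h).2)]
        rw [this, Finset.card_erase_of_mem hu]
        omega
      · have hJeq : J = I.erase v := by rw [hJdef, Finset.erase_eq_of_notMem hu]
        have h2 := Finset.pred_card_le_card_erase (s := I) (a := v)
        rw [hJeq]
        omega
    calc gammaIS G S = I.card := hcard.symm
      _ ≤ J.card + 1 := hcardJ
      _ ≤ gammaIS G (S.erase s(u, v)) + 1 := by
          exact Nat.add_le_add_right hle 1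

/-- If `x` is a PMAS of the independent set game on a graph `G`
with no isolated vertices, then `0 ≤ x_{S,i} ≤ 1` for every nonempty coalition
`S ⊆ N` and every `i ∈ S`. -/
theorem stmt_1 (G : SimpleGraph V) [DecidableRel G.Adj]
    (hiso : ∀ v : V, G.degree v ≠ 0)
    (x : Finset (Sym2 V) → Sym2 V → ℝ) (hx : IsPMAS G x) :
    ∀ S ⊆ G.edgeFinset, S.Nonempty → ∀ i ∈ S, 0 ≤ x S i ∧ x S i ≤ 1 := by
  obtain ⟨hpos, heff, hmono⟩ := hx
  intro S hS hSne i hi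
  refine ⟨hpos S hS i hi, ?_⟩
  have hiE : i ∈ G.edgeSet := SimpleGraph.mem_edgeFinset.mp (hS hi)
  by_cases hE : (S.erase i).Nonempty
  · have h1 := heff S hS hSne
    have h2 := heff (S.erase i) ((Finset.erase_subset _ _).trans hS) hE
    have hsum : ∑ j ∈ S.erase i, x (S.erase i) j ≤ ∑ j ∈ S.erase i, x S j :=
      Finset.sum_le_sum fun j hj =>
        hmono (S.erase i) S (Finset.erase_subset _ _) hS hE j hj
    have hsplit : x S i + ∑ j ∈ S.erase i, x S j = (gammaIS G S : ℝ) := by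
      rw [← h1]
      exact Finset.add_sum_erase S (x S) hi
    have hg' : (gammaIS G S : ℝ) ≤ (gammaIS G (S.erase i) : ℝ) + 1 := by
      exact_mod_cast gammaIS_le_erase_add_one G S i hiE
    linarith
  · have hSeq : S = {i} := by
      rcases Finset.erase_eq_empty_iff S i |>.mp
        (Finset.not_nonempty_iff_eq_empty.mp hE) with h | h
      · exact absurd (h ▸ hi) (Finset.notMem_empty i)
      · exact h
    subst hSeq
    have h1 := heff {i} hS hSne
    rw [Finset.sum_singleton] at h1
    have hg : (gammaIS G {i} : ℝ) ≤ 1 := by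
      exact_mod_cast gammaIS_singleton_le_one G hiso i hiE
    linarith
end

section
/- Let G = (V,E) be a finite simple graph with no isolated vertices, let Γ_G = (N,γ) be the independent set game on G, and let {x_S}_{S ⊆ N, S ≠ ∅} be a population monotonic allocation scheme of Γ_G. If an edge i ∈ E is not covered by some maximum independent set I of G (i.e., neither endpoint of i lies in I), then x_{S,i} = 0 for every nonempty S ⊆ N with i ∈ S. -/
open Finset

variable {V : Type*} [Fintype V] [DecidableEq V]

lemma alphaOn_eq_of_max (G : SimpleGraph V) (I : Finset V) (hI : Indep G I)
    (hImax : ∀ J : Finset V, Indep G J → J.card ≤ I.card)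
    (U : Set V) (hIU : ↑I ⊆ U) : alphaOn G U = I.card := by
  have hbdd : ∀ n ∈ {n : ℕ | ∃ J : Finset V, ↑J ⊆ U ∧ Indep G J ∧ J.card = n},
      n ≤ I.card := by
    rintro n ⟨J, hJU, hJind, rfl⟩
    exact hImax J hJind
  apply le_antisymm
  · exact csSup_le ⟨I.card, I, hIU, hI, rfl⟩ hbdd
  · exact le_csSup ⟨I.card, hbdd⟩ ⟨I, hIU, hI, rfl⟩

/-- If `x` is a PMAS of the independent set game on `G` and the
edge `i` is not covered by some maximum independent set `I` of `G`, then
`x_{S,i} = 0` for every nonempty coalition `S` containing `i`. -/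
theorem stmt_2 (G : SimpleGraph V) [DecidableRel G.Adj]
    (hiso : ∀ v : V, G.degree v ≠ 0)
    (x : Finset (Sym2 V) → Sym2 V → ℝ) (hx : IsPMAS G x)
    (I : Finset V) (hI : Indep G I)
    (hImax : ∀ J : Finset V, Indep G J → J.card ≤ I.card)
    (i : Sym2 V) (hi : i ∈ G.edgeSet)
    (hcov : ∀ v ∈ i, v ∉ I) :
    ∀ S ⊆ G.edgeFinset, i ∈ S → x S i = 0 := by
  obtain ⟨hpos, heff, hmono⟩ := hx
  set E := G.edgeFinset with hE
  have hiE : i ∈ E := SimpleGraph.mem_edgeFinset.mpr hi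
  -- the erase coalition is nonempty
  have hEerase : (E.erase i).Nonempty := by
    by_contra h
    rw [Finset.not_nonempty_iff_eq_empty] at h
    -- then every edge equals i
    have hIne : I.Nonempty := by
      rcases i with ⟨u, v⟩
      have : Indep G {u} := by
        intro a ha b hb
        simp at ha hb
        subst ha; subst hb
        exact G.irrefl
      have h1 : 1 ≤ I.card := by simpa using hImax {u} this
      exact Finset.card_pos.mp h1
    obtain ⟨w, hw⟩ := hIne
    have hdeg := hiso w
    rw [← G.card_neighborFinset_eq_degree] at hdeg
    obtain ⟨u, hu⟩ := Finset.card_pos.mp (Nat.pos_of_ne_zero hdeg)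
    rw [G.mem_neighborFinset] at hu
    have hwu : s(w, u) ∈ E := SimpleGraph.mem_edgeFinset.mpr hu
    have : s(w, u) = i := by
      by_contra hne
      have : s(w, u) ∈ E.erase i := Finset.mem_erase.mpr ⟨hne, hwu⟩
      simp [h] at this
    exact hcov w (this ▸ Sym2.mem_mk_left w u) hw
  -- gammaIS on E equals |I|
  have hgE : gammaIS G E = I.card := by
    apply alphaOn_eq_of_max G I hI hImax
    intro v hv e he
    exact Finset.mem_coe.mpr (SimpleGraph.mem_edgeFinset.mpr he.1)
  -- gammaIS on E.erase i equals |I|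
  have hgEi : gammaIS G (E.erase i) = I.card := by
    apply alphaOn_eq_of_max G I hI hImax
    intro v hv e he
    refine Finset.mem_coe.mpr (Finset.mem_erase.mpr ⟨?_, SimpleGraph.mem_edgeFinset.mpr he.1⟩)
    rintro rfl
    exact hcov v he.2 hv
  -- x E i = 0
  have hxE : x E i ≤ 0 := by
    have h1 : ∑ e ∈ E, x E e = (I.card : ℝ) := by
      rw [heff E (Finset.Subset.refl E) ⟨i, hiE⟩, hgE]
    have h2 : ∑ e ∈ E.erase i, x (E.erase i) e = (I.card : ℝ) := by
      rw [heff (E.erase i) (Finset.erase_subset i E) hEerase, hgEi]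
    have h3 : ∑ e ∈ E.erase i, x (E.erase i) e ≤ ∑ e ∈ E.erase i, x E e := by
      apply Finset.sum_le_sum
      intro e he
      exact hmono (E.erase i) E (Finset.erase_subset i E) (Finset.Subset.refl E)
        hEerase e he
    have h4 : ∑ e ∈ E.erase i, x E e + x E i = ∑ e ∈ E, x E e :=
      Finset.sum_erase_add E _ hiE
    linarith
  intro S hS hiS
  have h5 : x S i ≤ x E i := hmono S E hS (Finset.Subset.refl E) ⟨i, hiS⟩ i hiS
  have h6 : 0 ≤ x S i := hpos S hS i hiS
  linarith
end

section
/- Let G = (V,E) be a finite simple graph with no isolated vertices. If the independent set game Γ_G is population monotonic (i.e., admits a population monotonic allocation scheme), then every vertex of G has distance at most two to a pendant vertex of G. -/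
open Finset

variable {V : Type*} [Fintype V] [DecidableEq V]

lemma coe_incFinset (G : SimpleGraph V) [DecidableRel G.Adj] (z : V) :
    (incFinset G z : Set (Sym2 V)) = incEdges G z := by
  ext e
  simp [incFinset, incEdges, SimpleGraph.mem_edgeFinset]

lemma exists_adj_s4 (G : SimpleGraph V) [DecidableRel G.Adj]
    (hiso : ∀ w : V, G.degree w ≠ 0) (z : V) : ∃ y, G.Adj z y := by
  have hdz : G.degree z = (G.neighborFinset z).card := rfl
  have h : 0 < (G.neighborFinset z).card := by
    have := hiso z; omega
  obtain ⟨y, hy⟩ := Finset.card_pos.mp h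
  exact ⟨y, (SimpleGraph.mem_neighborFinset _ _ _).mp hy⟩

lemma alphaOn_clique (G : SimpleGraph V) (U : Set V) (v : V) (hv : v ∈ U)
    (hcl : ∀ a ∈ U, ∀ b ∈ U, a ≠ b → G.Adj a b) : alphaOn G U = 1 := by
  unfold alphaOn
  apply le_antisymm
  · apply csSup_le
    · refine ⟨0, ⟨∅, ?_, ?_, rfl⟩⟩
      · simp
      · intro a ha
        simp at ha
    · rintro n ⟨I, hIU, hInd, rfl⟩
      by_contra h
      push_neg at h
      obtain ⟨a, ha, b, hb, hab⟩ := Finset.one_lt_card.mp h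
      exact hInd a ha b hb (hcl a (hIU ha) b (hIU hb) hab)
  · apply le_csSup
    · refine ⟨Fintype.card V, ?_⟩
      rintro n ⟨I, _, _, rfl⟩
      exact I.card_le_univ
    · refine ⟨{v}, ?_, ?_, Finset.card_singleton v⟩
      · rw [Finset.coe_singleton]
        exact Set.singleton_subset_iff.mpr hv
      · intro a ha b hb
        rw [Finset.mem_singleton] at ha hb
        subst ha; subst hb
        exact fun h => G.irrefl h

lemma gammaIS_incFinset_eq_one (G : SimpleGraph V) [DecidableRel G.Adj]
    (hiso : ∀ w : V, G.degree w ≠ 0) (z : V)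
    (hnb : ∀ y, G.Adj z y → 2 ≤ G.degree y) :
    gammaIS G (incFinset G z) = 1 := by
  have hmem : ∀ w, w ∈ onlyInc G ↑(incFinset G z) → w = z := by
    intro w hw
    simp only [onlyInc, Set.mem_setOf_eq, coe_incFinset] at hw
    by_contra hwz
    have hN : ∀ y, G.Adj w y → y = z := by
      intro y hy
      have hmm : s(w,y) ∈ incEdges G w :=
        ⟨(SimpleGraph.mem_edgeSet _).mpr hy, Sym2.mem_mk_left w y⟩
      have hz' := hw hmm
      rcases Sym2.mem_iff.mp hz'.2 with h | h
      · exact absurd h.symm hwz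
      · exact h.symm
    obtain ⟨y0, hy0⟩ := exists_adj_s4 G hiso w
    have hwz' : G.Adj w z := (hN y0 hy0) ▸ hy0
    have h2 : 2 ≤ G.degree w := hnb w hwz'.symm
    have hsub : G.neighborFinset w ⊆ {z} := by
      intro y hy
      rw [Finset.mem_singleton]
      exact hN y ((SimpleGraph.mem_neighborFinset _ _ _).mp hy)
    have hc := Finset.card_le_card hsub
    rw [Finset.card_singleton] at hc
    have hdw : G.degree w = (G.neighborFinset w).card := rfl
    omega
  unfold gammaIS
  apply alphaOn_clique G _ z
  · show incEdges G z ⊆ _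
    rw [coe_incFinset]
  · intro a ha b hb hab
    exact absurd ((hmem a ha).trans (hmem b hb).symm) hab

lemma gammaIS_union_eq_one (G : SimpleGraph V) [DecidableRel G.Adj]
    (hiso : ∀ w : V, G.degree w ≠ 0) (v u : V) (huv : G.Adj v u)
    (hdeg : ∀ z, (G.Adj v z ∨ ∃ y, G.Adj v y ∧ G.Adj y z) → 2 ≤ G.degree z)
    (hP : ∀ w1 w2 : V, G.neighborFinset w1 = {u, v} → G.neighborFinset w2 = {u, v} → w1 = w2) :
    gammaIS G (incFinset G v ∪ incFinset G u) = 1 := by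
  have hcoe : ((incFinset G v ∪ incFinset G u : Finset (Sym2 V)) : Set (Sym2 V))
      = incEdges G v ∪ incEdges G u := by
    rw [Finset.coe_union, coe_incFinset, coe_incFinset]
  have hclass : ∀ z ∈ onlyInc G ↑(incFinset G v ∪ incFinset G u),
      z = v ∨ z = u ∨ G.neighborFinset z = {u, v} := by
    intro z hz
    simp only [onlyInc, Set.mem_setOf_eq, hcoe] at hz
    by_cases hzv : z = v
    · exact Or.inl hzv
    by_cases hzu : z = u
    · exact Or.inr (Or.inl hzu)
    right; right
    have hN : ∀ y, G.Adj z y → y = u ∨ y = v := by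
      intro y hy
      have hmm : s(z,y) ∈ incEdges G z :=
        ⟨(SimpleGraph.mem_edgeSet _).mpr hy, Sym2.mem_mk_left z y⟩
      rcases hz hmm with h | h
      · rcases Sym2.mem_iff.mp h.2 with h' | h'
        · exact absurd h'.symm hzv
        · exact Or.inr h'.symm
      · rcases Sym2.mem_iff.mp h.2 with h' | h'
        · exact absurd h'.symm hzu
        · exact Or.inl h'.symm
    obtain ⟨y0, hy0⟩ := exists_adj_s4 G hiso z
    have h2 : 2 ≤ G.degree z := by
      rcases hN y0 hy0 with rfl | rfl
      · exact hdeg z (Or.inr ⟨y0, huv, hy0.symm⟩)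
      · exact hdeg z (Or.inl hy0.symm)
    have hsub : G.neighborFinset z ⊆ {u, v} := by
      intro y hy
      rcases hN y ((SimpleGraph.mem_neighborFinset _ _ _).mp hy) with rfl | rfl
      · exact Finset.mem_insert_self _ _
      · exact Finset.mem_insert_of_mem (Finset.mem_singleton_self _)
    refine Finset.eq_of_subset_of_card_le hsub ?_
    have hc : ({u, v} : Finset V).card ≤ 2 := by
      have := Finset.card_insert_le u ({v} : Finset V)
      rw [Finset.card_singleton] at this
      omega
    have hdz : G.degree z = (G.neighborFinset z).card := rfl
    omega
  have hadjW : ∀ w, G.neighborFinset w = {u, v} → G.Adj w u ∧ G.Adj w v := by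
    intro w hw
    constructor
    · have : u ∈ G.neighborFinset w := by
        rw [hw]; exact Finset.mem_insert_self _ _
      exact (SimpleGraph.mem_neighborFinset _ _ _).mp this
    · have : v ∈ G.neighborFinset w := by
        rw [hw]; exact Finset.mem_insert_of_mem (Finset.mem_singleton_self _)
      exact (SimpleGraph.mem_neighborFinset _ _ _).mp this
  unfold gammaIS
  apply alphaOn_clique G _ v
  · show incEdges G v ⊆ _
    rw [hcoe]
    exact Set.subset_union_left
  · intro a ha b hb hab
    rcases hclass a ha with rfl | rfl | hNa <;> rcases hclass b hb with rfl | rfl | hNb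
    · exact absurd rfl hab
    · exact huv
    · exact ((hadjW b hNb).2).symm
    · exact huv.symm
    · exact absurd rfl hab
    · exact ((hadjW b hNb).1).symm
    · exact (hadjW a hNa).2
    · exact (hadjW a hNa).1
    · exact absurd (hP a b hNa hNb) hab

/-- Lemma 4 of the paper.  If the independent set game on a
graph `G` with no isolated vertices is population monotonic, then every vertex
has distance at most two to a pendant vertex. -/
theorem stmt_4 (G : SimpleGraph V) [DecidableRel G.Adj]
    (hiso : ∀ v : V, G.degree v ≠ 0)
    (hpm : ∃ x : Finset (Sym2 V) → Sym2 V → ℝ, IsPMAS G x) :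
    ∀ v : V, NearPendant G v := by
  intro v
  by_contra hfar
  obtain ⟨x, hpos, heff, hmono⟩ := hpm
  have hdeg2 : ∀ z : V, (z = v ∨ G.Adj v z ∨ ∃ y, G.Adj v y ∧ G.Adj y z) →
      2 ≤ G.degree z := by
    intro z hz
    have h1 : G.degree z ≠ 1 := by
      intro hd
      apply hfar
      refine ⟨z, hd, ?_⟩
      rcases hz with rfl | h | ⟨y, hvy, hyz⟩
      · exact ⟨SimpleGraph.Walk.nil, by simp⟩
      · exact ⟨SimpleGraph.Walk.cons h SimpleGraph.Walk.nil, by simp⟩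
      · exact ⟨SimpleGraph.Walk.cons hvy (SimpleGraph.Walk.cons hyz SimpleGraph.Walk.nil),
          by simp⟩
    have h0 := hiso z
    omega
  have hdeg' : ∀ z, (G.Adj v z ∨ ∃ y, G.Adj v y ∧ G.Adj y z) → 2 ≤ G.degree z :=
    fun z h => hdeg2 z (Or.inr h)
  have hδv_sub : incFinset G v ⊆ G.edgeFinset := Finset.filter_subset _ _
  have hγv : gammaIS G (incFinset G v) = 1 :=
    gammaIS_incFinset_eq_one G hiso v (fun y hy => hdeg2 y (Or.inr (Or.inl hy)))
  have hδv_ne : (incFinset G v).Nonempty := by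
    obtain ⟨y, hy⟩ := exists_adj_s4 G hiso v
    exact ⟨s(v,y), Finset.mem_filter.mpr
      ⟨SimpleGraph.mem_edgeFinset.mpr ((SimpleGraph.mem_edgeSet _).mpr hy), Sym2.mem_mk_left v y⟩⟩
  have heffv : ∑ i ∈ incFinset G v, x (incFinset G v) i = 1 := by
    rw [heff _ hδv_sub hδv_ne, hγv]; norm_num
  -- key inequality
  have hkey : ∀ u : V, G.Adj v u →
      (∀ w1 w2 : V, G.neighborFinset w1 = {u, v} → G.neighborFinset w2 = {u, v} → w1 = w2) →
      1 ≤ x (incFinset G v) s(v,u) := by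
    intro u huv hP
    have hvu_ne : v ≠ u := G.ne_of_adj huv
    have he_edge : s(v,u) ∈ G.edgeFinset :=
      SimpleGraph.mem_edgeFinset.mpr ((SimpleGraph.mem_edgeSet _).mpr huv)
    have he_v : s(v,u) ∈ incFinset G v := Finset.mem_filter.mpr ⟨he_edge, Sym2.mem_mk_left v u⟩
    have he_u : s(v,u) ∈ incFinset G u := Finset.mem_filter.mpr ⟨he_edge, Sym2.mem_mk_right v u⟩
    have hδu_sub : incFinset G u ⊆ G.edgeFinset := Finset.filter_subset _ _
    have hSu_sub : incFinset G v ∪ incFinset G u ⊆ G.edgeFinset :=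
      Finset.union_subset hδv_sub hδu_sub
    have hγu : gammaIS G (incFinset G u) = 1 :=
      gammaIS_incFinset_eq_one G hiso u (fun y hy => hdeg2 y (Or.inr (Or.inr ⟨u, huv, hy⟩)))
    have hγS : gammaIS G (incFinset G v ∪ incFinset G u) = 1 :=
      gammaIS_union_eq_one G hiso v u huv hdeg' hP
    have heffu : ∑ i ∈ incFinset G u, x (incFinset G u) i = 1 := by
      rw [heff _ hδu_sub ⟨s(v,u), he_u⟩, hγu]; norm_num
    have heffS : ∑ i ∈ incFinset G v ∪ incFinset G u, x (incFinset G v ∪ incFinset G u) i = 1 := by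
      rw [heff _ hSu_sub ⟨s(v,u), Finset.mem_union_left _ he_v⟩, hγS]; norm_num
    have hdisj : Disjoint (incFinset G u) ((incFinset G v).erase s(v,u)) := by
      rw [Finset.disjoint_left]
      intro f hfu hfv
      have hfv' := Finset.mem_of_mem_erase hfv
      have hfe : f ≠ s(v,u) := Finset.ne_of_mem_erase hfv
      have hu_f : u ∈ f := (Finset.mem_filter.mp hfu).2
      have hv_f : v ∈ f := (Finset.mem_filter.mp hfv').2
      have hf : f = s(u,v) := (Sym2.mem_and_mem_iff (fun h => hvu_ne h.symm)).mp ⟨hu_f, hv_f⟩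
      exact hfe (hf.trans Sym2.eq_swap)
    have hsub2 : incFinset G u ∪ (incFinset G v).erase s(v,u) ⊆ incFinset G v ∪ incFinset G u := by
      apply Finset.union_subset
      · exact Finset.subset_union_right
      · exact (Finset.erase_subset _ _).trans Finset.subset_union_left
    have h2 : ∑ i ∈ incFinset G u ∪ (incFinset G v).erase s(v,u),
        x (incFinset G v ∪ incFinset G u) i ≤ 1 := by
      rw [← heffS]
      apply Finset.sum_le_sum_of_subset_of_nonneg hsub2
      intro i hi _
      exact hpos _ hSu_sub i hi
    rw [Finset.sum_union hdisj] at h2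
    have h4 : ∑ i ∈ incFinset G u, x (incFinset G u) i ≤
        ∑ i ∈ incFinset G u, x (incFinset G v ∪ incFinset G u) i :=
      Finset.sum_le_sum fun i hi =>
        hmono _ _ Finset.subset_union_right hSu_sub ⟨s(v,u), he_u⟩ i hi
    have h5 : ∑ i ∈ (incFinset G v).erase s(v,u), x (incFinset G v) i ≤
        ∑ i ∈ (incFinset G v).erase s(v,u), x (incFinset G v ∪ incFinset G u) i :=
      Finset.sum_le_sum fun i hi =>
        hmono _ _ Finset.subset_union_left hSu_sub hδv_ne i (Finset.mem_of_mem_erase hi)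
    have h7 : x (incFinset G v) s(v,u) +
        ∑ i ∈ (incFinset G v).erase s(v,u), x (incFinset G v) i = 1 := by
      rw [Finset.add_sum_erase _ _ he_v]
      exact heffv
    linarith
  -- final contradiction from two good neighbors
  have final : ∀ u1 u2 : V, G.Adj v u1 → G.Adj v u2 → u1 ≠ u2 →
      1 ≤ x (incFinset G v) s(v,u1) → 1 ≤ x (incFinset G v) s(v,u2) → False := by
    intro u1 u2 h1 h2 hne k1 k2
    have he12 : s(v,u1) ≠ s(v,u2) := fun h => hne (Sym2.congr_right.mp h)
    have hm1 : s(v,u1) ∈ incFinset G v := Finset.mem_filter.mpr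
      ⟨SimpleGraph.mem_edgeFinset.mpr ((SimpleGraph.mem_edgeSet _).mpr h1), Sym2.mem_mk_left v u1⟩
    have hm2 : s(v,u2) ∈ incFinset G v := Finset.mem_filter.mpr
      ⟨SimpleGraph.mem_edgeFinset.mpr ((SimpleGraph.mem_edgeSet _).mpr h2), Sym2.mem_mk_left v u2⟩
    have hpsub : ({s(v,u1), s(v,u2)} : Finset (Sym2 V)) ⊆ incFinset G v := by
      intro f hf
      rcases Finset.mem_insert.mp hf with rfl | hf
      · exact hm1
      · rw [Finset.mem_singleton] at hf
        subst hf
        exact hm2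
    have hsum : ∑ i ∈ ({s(v,u1), s(v,u2)} : Finset (Sym2 V)), x (incFinset G v) i ≤ 1 := by
      rw [← heffv]
      apply Finset.sum_le_sum_of_subset_of_nonneg hpsub
      intro i hi _
      exact hpos _ hδv_sub i hi
    rw [Finset.sum_pair he12] at hsum
    linarith
  have hvdeg : 2 ≤ G.degree v := hdeg2 v (Or.inl rfl)
  have hNv : 1 < (G.neighborFinset v).card := by
    have hdv : G.degree v = (G.neighborFinset v).card := rfl
    omega
  by_cases hall : ∀ u ∈ G.neighborFinset v, ∀ w1 w2 : V,
      G.neighborFinset w1 = {u, v} → G.neighborFinset w2 = {u, v} → w1 = w2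
  · obtain ⟨u1, hu1, u2, hu2, hne⟩ := Finset.one_lt_card.mp hNv
    have ha1 : G.Adj v u1 := (SimpleGraph.mem_neighborFinset _ _ _).mp hu1
    have ha2 : G.Adj v u2 := (SimpleGraph.mem_neighborFinset _ _ _).mp hu2
    exact final u1 u2 ha1 ha2 hne (hkey u1 ha1 (hall u1 hu1)) (hkey u2 ha2 (hall u2 hu2))
  · push_neg at hall
    obtain ⟨u, huNv, w1, w2, hw1, hw2, hne⟩ := hall
    have hadjW : ∀ w : V, G.neighborFinset w = {u, v} → G.Adj w u ∧ G.Adj w v := by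
      intro w hw
      constructor
      · have : u ∈ G.neighborFinset w := by
          rw [hw]; exact Finset.mem_insert_self _ _
        exact (SimpleGraph.mem_neighborFinset _ _ _).mp this
      · have : v ∈ G.neighborFinset w := by
          rw [hw]; exact Finset.mem_insert_of_mem (Finset.mem_singleton_self _)
        exact (SimpleGraph.mem_neighborFinset _ _ _).mp this
    have hPgen : ∀ a b : V, G.neighborFinset a = {u, v} → G.neighborFinset b = {u, v} →
        a ≠ b → ∀ z1 z2 : V, G.neighborFinset z1 = {a, v} → G.neighborFinset z2 = {a, v} →
        z1 = z2 := by
      intro a b hNa hNb hab z1 z2 hz1 _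
      exfalso
      have hz1a : G.Adj z1 a := by
        have : a ∈ G.neighborFinset z1 := by
          rw [hz1]; exact Finset.mem_insert_self _ _
        exact (SimpleGraph.mem_neighborFinset _ _ _).mp this
      have hz1v : G.Adj z1 v := by
        have : v ∈ G.neighborFinset z1 := by
          rw [hz1]; exact Finset.mem_insert_of_mem (Finset.mem_singleton_self _)
        exact (SimpleGraph.mem_neighborFinset _ _ _).mp this
      have hz1Na : z1 ∈ G.neighborFinset a := (SimpleGraph.mem_neighborFinset _ _ _).mpr hz1a.symm
      rw [hNa] at hz1Na
      rcases Finset.mem_insert.mp hz1Na with h | h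
      · -- z1 = u, so N(u) = {a, v}; but b is adjacent to u and b ∉ {a, v}
        subst h
        have hub : G.Adj z1 b := ((hadjW b hNb).1).symm
        have : b ∈ G.neighborFinset z1 := (SimpleGraph.mem_neighborFinset _ _ _).mpr hub
        rw [hz1] at this
        rcases Finset.mem_insert.mp this with h' | h'
        · exact hab h'.symm
        · rw [Finset.mem_singleton] at h'
          subst h'
          exact G.irrefl ((hadjW b hNb).2)
      · rw [Finset.mem_singleton] at h
        subst h
        exact G.irrefl hz1v
    have hv1 : G.Adj v w1 := ((hadjW w1 hw1).2).symm
    have hv2 : G.Adj v w2 := ((hadjW w2 hw2).2).symm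
    exact final w1 w2 hv1 hv2 hne
      (hkey w1 hv1 (hPgen w1 w2 hw1 hw2 hne))
      (hkey w2 hv2 (hPgen w2 w1 hw2 hw1 hne.symm))
end

section
/- Let G = (V,E) be a finite simple graph with no isolated vertices. If (i) every vertex of G has distance at most two to a pendant vertex, and (ii) no two non-pendant edges of type I are incident, then the independent set game Γ_G is population monotonic, i.e., admits a population monotonic allocation scheme. -/
open Finset

variable {V : Type*} [Fintype V] [DecidableEq V]

/-!
Call a vertex inner if it is neither pendant nor adjacent to a pendant vertex; the type-I edges
are exactly the edges joining two inner vertices. If the type-I edges are pairwise disjoint, then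
`γ(S)` is the number of pendant and type-I edges of `S` with an endpoint in `V⟨S⟩`
(`edgeTokens`), plus the number of inner vertices of `V⟨S⟩` lying on no type-I edge
(`freeInner`). Indeed, every other vertex of an independent set `I ⊆ V⟨S⟩` lies on such an edge,
which contains no second vertex of `I`; conversely, a pendant endpoint of each pendant edge, an
endpoint in `V⟨S⟩` of each type-I edge, and all free inner vertices form an independent set.
Both counts grow with `S`, so the scheme giving `1` to each counted edge and letting each counted
free inner vertex pay `1` to a fixed incident edge is a PMAS.
-/

section IndependentSetGame

open scoped Classical

variable {W : Type*}

section Graph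

variable {G : SimpleGraph W}

lemma onlyInc_mono {S T : Set (Sym2 W)} (hST : S ⊆ T) : onlyInc G S ⊆ onlyInc G T :=
  fun _ hv => hv.trans hST

lemma Indep.eq_of_mem {I : Finset W} (hI : Indep G I) {e : Sym2 W} (he : e ∈ G.edgeSet)
    {u v : W} (hu : u ∈ I) (hv : v ∈ I) (hue : u ∈ e) (hve : v ∈ e) : u = v := by
  by_contra hne
  exact hI u hu v hv (G.adj_of_mem_incidenceSet hne ⟨he, hue⟩ ⟨he, hve⟩)

lemma alphaOn_le {U : Set W} {m : ℕ} (h : ∀ I : Finset W, ↑I ⊆ U → Indep G I → #I ≤ m) :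
    alphaOn G U ≤ m :=
  csSup_le ⟨0, ∅, by simp, by simp [Indep], rfl⟩ fun _ ⟨I, hIU, hI, hn⟩ => hn ▸ h I hIU hI

lemma card_le_alphaOn [Fintype W] {U : Set W} {I : Finset W} (hIU : ↑I ⊆ U) (hI : Indep G I) :
    #I ≤ alphaOn G U :=
  le_csSup ⟨Fintype.card W, fun _ ⟨J, _, _, hn⟩ => hn ▸ J.card_le_univ⟩ ⟨I, hIU, hI, rfl⟩

end Graph

variable [Fintype W] (G : SimpleGraph W) [DecidableRel G.Adj]

def IsSupport (v : W) : Prop := ∃ p, G.Adj v p ∧ G.degree p = 1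

def IsInner (v : W) : Prop := G.degree v ≠ 1 ∧ ¬IsSupport G v

def TypeIEdgesDisjoint : Prop :=
  ∀ ⦃e f : Sym2 W⦄ ⦃v : W⦄, TypeI G e → TypeI G f → v ∈ e → v ∈ f → e = f

noncomputable def edgeTokens (S : Finset (Sym2 W)) : Finset (Sym2 W) :=
  {e ∈ S | (PendantEdge G e ∨ TypeI G e) ∧ ∃ v ∈ e, v ∈ onlyInc G S}

noncomputable def freeInner (S : Finset (Sym2 W)) : Finset W :=
  {v | IsInner G v ∧ (∀ e, TypeI G e → v ∉ e) ∧ v ∈ onlyInc G S}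

noncomputable def alloc (ν : W → W) (S : Finset (Sym2 W)) (i : Sym2 W) : ℕ :=
  #{e ∈ edgeTokens G S | e = i} + #{v ∈ freeInner G S | s(v, ν v) = i}

variable {G}

lemma eq_of_degree_eq_one {v : W} (hv : G.degree v = 1) {e f : Sym2 W} (he : e ∈ G.edgeSet)
    (hf : f ∈ G.edgeSet) (hve : v ∈ e) (hvf : v ∈ f) : e = f := by
  obtain ⟨w, rfl⟩ := Sym2.mem_iff_exists.mp hve
  obtain ⟨w', rfl⟩ := Sym2.mem_iff_exists.mp hvf
  rw [(SimpleGraph.degree_eq_one_iff_existsUnique_adj.mp hv).unique (G.mem_edgeSet.mp he)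
    (G.mem_edgeSet.mp hf)]

lemma PendantEdge.not_isInner {e : Sym2 W} (he : PendantEdge G e) {v : W} (hv : v ∈ e) :
    ¬IsInner G v := by
  obtain ⟨he, p, hp, hdeg⟩ := he
  rintro ⟨hv1, hsupp⟩
  obtain rfl | hne := eq_or_ne v p
  · exact hv1 hdeg
  · exact hsupp ⟨p, G.adj_of_mem_incidenceSet hne ⟨he, hv⟩ ⟨he, hp⟩, hdeg⟩

lemma TypeI.isInner {e : Sym2 W} (he : TypeI G e) {v : W} (hv : v ∈ e) : IsInner G v :=
  ⟨fun h => he.2.1 ⟨he.1, v, hv, h⟩, fun ⟨p, hvp, hp⟩ =>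
    he.2.2 s(v, p) ⟨hvp, p, Sym2.mem_mk_right _ _, hp⟩ ⟨v, hv, Sym2.mem_mk_left _ _⟩⟩

lemma typeI_of_adj {u v : W} (huv : G.Adj u v) (hu : IsInner G u) (hv : IsInner G v) :
    TypeI G s(u, v) := by
  have hinner : ∀ w ∈ s(u, v), IsInner G w := by
    simp only [Sym2.mem_iff, forall_eq_or_imp, forall_eq]; exact ⟨hu, hv⟩
  refine ⟨huv, fun ⟨_, w, hw, hdeg⟩ => (hinner w hw).1 hdeg,
    fun f hf ⟨w, hwe, hwf⟩ => hf.not_isInner hwf (hinner w hwe)⟩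

lemma typeI_or_degree_eq_one_of_adj {u w : W} (huw : G.Adj u w)
    (hu : G.degree u = 1 ∨ IsInner G u) (hw : G.degree w = 1 ∨ IsInner G w) :
    TypeI G s(u, w) ∨ G.degree u = 1 ∧ G.degree w = 1 := by
  rcases hu with hu | hu <;> rcases hw with hw | hw
  · exact Or.inr ⟨hu, hw⟩
  · exact absurd ⟨u, huw.symm, hu⟩ hw.2
  · exact absurd ⟨w, huw, hw⟩ hu.2
  · exact Or.inl (typeI_of_adj huw hu hw)

variable {S T : Finset (Sym2 W)}

lemma edgeTokens_mono (hST : S ⊆ T) : edgeTokens G S ⊆ edgeTokens G T := by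
  intro e he
  simp only [edgeTokens, mem_filter] at he ⊢
  obtain ⟨heS, htype, v, hve, hv⟩ := he
  exact ⟨hST heS, htype, v, hve, onlyInc_mono (coe_subset.mpr hST) hv⟩

lemma mem_freeInner {v : W} :
    v ∈ freeInner G S ↔ IsInner G v ∧ (∀ e, TypeI G e → v ∉ e) ∧ v ∈ onlyInc G S := by
  simp [freeInner]

lemma freeInner_mono (hST : S ⊆ T) : freeInner G S ⊆ freeInner G T := by
  intro v hv
  rw [mem_freeInner] at hv ⊢
  exact ⟨hv.1, hv.2.1, onlyInc_mono (coe_subset.mpr hST) hv.2.2⟩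

lemma alloc_mono (ν : W → W) (hST : S ⊆ T) (i : Sym2 W) :
    alloc G ν S i ≤ alloc G ν T i :=
  add_le_add (card_le_card (filter_subset_filter _ (edgeTokens_mono hST)))
    (card_le_card (filter_subset_filter _ (freeInner_mono hST)))

lemma sum_alloc {ν : W → W} (hν : ∀ v, G.Adj v (ν v)) (S : Finset (Sym2 W)) :
    ∑ i ∈ S, alloc G ν S i = #(edgeTokens G S) + #(freeInner G S) := by
  simp only [alloc]
  rw [sum_add_distrib, ← card_eq_sum_card_fiberwise, ← card_eq_sum_card_fiberwise]
  · exact fun v hv => (mem_freeInner.mp hv).2.2 ⟨hν v, Sym2.mem_mk_left _ _⟩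
  · intro e he
    exact (mem_filter.mp he).1

lemma mem_edgeSet_of_mem_edgeTokens {e : Sym2 W} (he : e ∈ edgeTokens G S) : e ∈ G.edgeSet := by
  obtain ⟨-, hpend | htype, -⟩ := mem_filter.mp he
  exacts [hpend.1, htype.1]

lemma PendantEdge.mem_edgeTokens {e : Sym2 W} (he : PendantEdge G e) {v : W} (hve : v ∈ e)
    (hv : v ∈ onlyInc G S) : e ∈ edgeTokens G S :=
  mem_filter.mpr ⟨hv ⟨he.1, hve⟩, Or.inl he, v, hve, hv⟩

lemma TypeI.mem_edgeTokens {e : Sym2 W} (he : TypeI G e) {v : W} (hve : v ∈ e)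
    (hv : v ∈ onlyInc G S) : e ∈ edgeTokens G S :=
  mem_filter.mpr ⟨hv ⟨he.1, hve⟩, Or.inr he, v, hve, hv⟩

lemma exists_mem_edgeTokens {v : W} (hv : v ∈ onlyInc G S) (hfree : v ∉ freeInner G S) :
    ∃ e ∈ edgeTokens G S, v ∈ e := by
  by_cases hdeg : G.degree v = 1
  · obtain ⟨w, hvw⟩ := G.degree_pos_iff_exists_adj v |>.mp (by omega)
    exact ⟨_, PendantEdge.mem_edgeTokens ⟨hvw, v, Sym2.mem_mk_left _ _, hdeg⟩
      (Sym2.mem_mk_left _ _) hv, Sym2.mem_mk_left _ _⟩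
  by_cases hsupp : IsSupport G v
  · obtain ⟨p, hvp, hp⟩ := hsupp
    exact ⟨_, PendantEdge.mem_edgeTokens ⟨hvp, p, Sym2.mem_mk_right _ _, hp⟩
      (Sym2.mem_mk_left _ _) hv, Sym2.mem_mk_left _ _⟩
  have : ∃ e, TypeI G e ∧ v ∈ e := by
    by_contra! h
    exact hfree (mem_freeInner.mpr ⟨⟨hdeg, hsupp⟩, h, hv⟩)
  obtain ⟨e, he, hve⟩ := this
  exact ⟨e, he.mem_edgeTokens hve hv, hve⟩

lemma card_le_of_indep {I : Finset W} (hIS : ↑I ⊆ onlyInc G S) (hI : Indep G I) :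
    #I ≤ #(edgeTokens G S) + #(freeInner G S) := by
  rw [← card_filter_add_card_filter_not (· ∈ freeInner G S), add_comm]
  refine add_le_add ?_ (card_le_card fun v hv => (mem_filter.mp hv).2)
  refine card_le_card_of_forall_subsingleton (· ∈ ·) (fun v hv => ?_) fun e he u hu w hw => ?_
  · obtain ⟨hvI, hfree⟩ := mem_filter.mp hv
    exact exists_mem_edgeTokens (hIS hvI) hfree
  · exact hI.eq_of_mem (mem_edgeSet_of_mem_edgeTokens he) (mem_filter.mp hu.1).1
      (mem_filter.mp hw.1).1 hu.2 hw.2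

lemma exists_endpoint_of_mem_edgeTokens {e : Sym2 W} (he : e ∈ edgeTokens G S) :
    ∃ u ∈ e, u ∈ onlyInc G S ∧ (G.degree u = 1 ∨ IsInner G u) := by
  obtain ⟨heS, hpend | htype, v, hve, hv⟩ := mem_filter.mp he
  · obtain ⟨he', p, hpe, hp⟩ := hpend
    refine ⟨p, hpe, fun f hf => ?_, Or.inl hp⟩
    rw [eq_of_degree_eq_one hp hf.1 he' hf.2 hpe]
    exact heS
  · exact ⟨v, hve, hv, Or.inr (htype.isInner hve)⟩

lemma notMem_freeInner_of_mem_edgeTokens {e : Sym2 W} (he : e ∈ edgeTokens G S) {u : W}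
    (hu : u ∈ e) : u ∉ freeInner G S := by
  intro hfree
  obtain ⟨hinner, hcover, -⟩ := mem_freeInner.mp hfree
  obtain ⟨-, hpend | htype, -⟩ := mem_filter.mp he
  · exact hpend.not_isInner hu hinner
  · exact hcover e htype hu

lemma typeI_of_mem_edgeTokens {e : Sym2 W} (he : e ∈ edgeTokens G S) {u : W} (hu : u ∈ e)
    (hinner : IsInner G u) : TypeI G e := by
  obtain ⟨-, hpend | htype, -⟩ := mem_filter.mp he
  · exact absurd hinner (hpend.not_isInner hu)
  · exact htype

lemma eq_of_mem_edgeTokens (hI : TypeIEdgesDisjoint G) {e f : Sym2 W} (he : e ∈ edgeTokens G S)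
    (hf : f ∈ edgeTokens G S) {u : W} (hue : u ∈ e) (huf : u ∈ f)
    (hu : G.degree u = 1 ∨ IsInner G u) : e = f := by
  rcases hu with hu | hu
  · exact eq_of_degree_eq_one hu (mem_edgeSet_of_mem_edgeTokens he)
      (mem_edgeSet_of_mem_edgeTokens hf) hue huf
  · exact hI (typeI_of_mem_edgeTokens he hue hu) (typeI_of_mem_edgeTokens hf huf hu) hue huf

lemma mk_mem_edgeTokens_of_adj {u w : W} (huw : G.Adj u w) (hu : G.degree u = 1 ∨ IsInner G u)
    (hw : G.degree w = 1 ∨ IsInner G w) (hS : u ∈ onlyInc G S) : s(u, w) ∈ edgeTokens G S := by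
  rcases typeI_or_degree_eq_one_of_adj huw hu hw with htype | ⟨hu1, -⟩
  · exact htype.mem_edgeTokens (Sym2.mem_mk_left u w) hS
  · exact PendantEdge.mem_edgeTokens ⟨huw, u, Sym2.mem_mk_left u w, hu1⟩ (Sym2.mem_mk_left u w) hS

lemma not_adj_of_mem_freeInner {u w : W} (hu : u ∈ freeInner G S)
    (hw : G.degree w = 1 ∨ IsInner G w) : ¬G.Adj u w := by
  intro huw
  obtain ⟨hinner, hcover, -⟩ := mem_freeInner.mp hu
  rcases typeI_or_degree_eq_one_of_adj huw (Or.inr hinner) hw with htype | ⟨hu1, -⟩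
  · exact hcover _ htype (Sym2.mem_mk_left u w)
  · exact hinner.1 hu1

lemma exists_indep_card_eq (hI : TypeIEdgesDisjoint G) (S : Finset (Sym2 W)) :
    ∃ J : Finset W, ↑J ⊆ onlyInc G S ∧ Indep G J ∧
      #J = #(edgeTokens G S) + #(freeInner G S) := by
  choose f hfe hf using fun e : edgeTokens G S => exists_endpoint_of_mem_edgeTokens e.2
  set J := (edgeTokens G S).attach.image f ∪ freeInner G S
  have hinj : Function.Injective f := fun e e' hee' =>
    Subtype.ext (eq_of_mem_edgeTokens hI e.2 e'.2 (hfe e) (hee' ▸ hfe e') (hf e).2)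
  have hdisj : Disjoint ((edgeTokens G S).attach.image f) (freeInner G S) := by
    simp only [disjoint_left, mem_image]
    rintro _ ⟨e, -, rfl⟩
    exact notMem_freeInner_of_mem_edgeTokens e.2 (hfe e)
  have hgood : ∀ u ∈ J, u ∈ onlyInc G S ∧ (G.degree u = 1 ∨ IsInner G u) := by
    intro u hu
    rcases mem_union.mp hu with hu | hu
    · obtain ⟨e, -, rfl⟩ := mem_image.mp hu
      exact hf e
    · obtain ⟨hinner, -, hS⟩ := mem_freeInner.mp hu
      exact ⟨hS, Or.inr hinner⟩
  refine ⟨J, fun u hu => (hgood u hu).1, fun u hu w hw huw => ?_,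
    by rw [card_union_of_disjoint hdisj, card_image_of_injective _ hinj, card_attach]⟩
  rcases mem_union.mp hu with hu' | hu'
  · rcases mem_union.mp hw with hw' | hw'
    · obtain ⟨e, -, rfl⟩ := mem_image.mp hu'
      obtain ⟨e', -, rfl⟩ := mem_image.mp hw'
      have htok := mk_mem_edgeTokens_of_adj huw (hgood _ hu).2 (hgood _ hw).2 (hgood _ hu).1
      have hee' : e = e' := Subtype.ext <|
        (eq_of_mem_edgeTokens hI e.2 htok (hfe e) (Sym2.mem_mk_left _ _) (hgood _ hu).2).trans
          (eq_of_mem_edgeTokens hI e'.2 htok (hfe e') (Sym2.mem_mk_right _ _) (hgood _ hw).2).symm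
      exact G.irrefl (hee' ▸ huw)
    · exact not_adj_of_mem_freeInner hw' (hgood _ hu).2 huw.symm
  · exact not_adj_of_mem_freeInner hu' (hgood _ hw).2 huw

lemma gammaIS_eq (hI : TypeIEdgesDisjoint G) (S : Finset (Sym2 W)) :
    gammaIS G S = #(edgeTokens G S) + #(freeInner G S) := by
  obtain ⟨J, hJS, hJ, hcard⟩ := exists_indep_card_eq hI S
  exact le_antisymm (alphaOn_le fun _ hIS hind => card_le_of_indep hIS hind)
    (hcard ▸ card_le_alphaOn hJS hJ)

end IndependentSetGame

theorem stmt_8_general (G : SimpleGraph V) [DecidableRel G.Adj]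
    (hiso : ∀ v : V, G.degree v ≠ 0)
    (h2 : ∀ e f : Sym2 V, TypeI G e → TypeI G f → e ≠ f →
      ¬ ∃ w : V, w ∈ e ∧ w ∈ f) :
    ∃ x : Finset (Sym2 V) → Sym2 V → ℝ, IsPMAS G x := by
  have hI : TypeIEdgesDisjoint G := fun e f v he hf hve hvf =>
    by_contra fun hne => h2 e f he hf hne ⟨v, hve, hvf⟩
  choose ν hν using fun v => (G.degree_pos_iff_exists_adj v).mp (Nat.pos_of_ne_zero (hiso v))
  refine ⟨fun S i => alloc G ν S i, fun _ _ _ _ => Nat.cast_nonneg _, fun S _ _ => ?_,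
    fun _ _ hST _ _ i _ => Nat.cast_le.mpr (alloc_mono ν hST i)⟩
  rw [← Nat.cast_sum, sum_alloc hν, gammaIS_eq hI]

/-- Lemma 8 of the paper.  If every vertex of `G` has distance
at most two to a pendant vertex, and no two distinct non-pendant edges of type I
are incident, then the independent set game on `G` is population monotonic. -/
theorem stmt_8 (G : SimpleGraph V) [DecidableRel G.Adj]
    (hiso : ∀ v : V, G.degree v ≠ 0)
    (h1 : ∀ v : V, NearPendant G v)
    (h2 : ∀ e f : Sym2 V, TypeI G e → TypeI G f → e ≠ f →
      ¬ ∃ w : V, w ∈ e ∧ w ∈ f) :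
    ∃ x : Finset (Sym2 V) → Sym2 V → ℝ, IsPMAS G x :=
  stmt_8_general G hiso h2
end

section
/- Let (N,γ) be a cooperative game on a finite player set N with γ(∅) = 0, and let {x_S}_{S ⊆ N, S ≠ ∅} be a population monotonic allocation scheme of (N,γ). Then for all nonempty coalitions S, T ⊆ N, γ(S ∪ T) + ∑_{i ∈ S ∩ T} x_{S,i} ≥ γ(S) + γ(T). -/
open Finset

/-- Let `(N, γ)` be a cooperative game on a finite player set
(the type `ι`, the grand coalition being `Finset.univ`) with `γ(∅) = 0`, and let
`x` be a population monotonic allocation scheme of `(N, γ)`.  Then for all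
nonempty coalitions `S, T`, `γ(S ∪ T) + ∑_{i ∈ S ∩ T} x_{S,i} ≥ γ(S) + γ(T)`. -/
theorem stmt_10 {ι : Type*} [Fintype ι] [DecidableEq ι]
    (γ : Finset ι → ℝ) (hγ : γ ∅ = 0)
    (x : Finset ι → ι → ℝ)
    (hnn : ∀ S : Finset ι, S.Nonempty → ∀ i ∈ S, 0 ≤ x S i)
    (heff : ∀ S : Finset ι, S.Nonempty → ∑ i ∈ S, x S i = γ S)
    (hmono : ∀ S T : Finset ι, S ⊆ T → S.Nonempty → ∀ i ∈ S, x S i ≤ x T i) :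
    ∀ S T : Finset ι, S.Nonempty → T.Nonempty →
      γ S + γ T ≤ γ (S ∪ T) + ∑ i ∈ S ∩ T, x S i := by
  intro S T hS hT
  have hUT : T ⊆ S ∪ T := subset_union_right
  have hUS : S ⊆ S ∪ T := subset_union_left
  have hU : (S ∪ T).Nonempty := hS.mono hUS
  -- γ(S∪T) = ∑_{S\T} x_{S∪T} + ∑_T x_{S∪T}
  have hsplit : γ (S ∪ T) = ∑ i ∈ S \ T, x (S ∪ T) i + ∑ i ∈ T, x (S ∪ T) i := by
    rw [← heff (S ∪ T) hU, ← Finset.sum_union (Finset.sdiff_disjoint)]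
    congr 1
    rw [Finset.sdiff_union_self_eq_union]
  have h1 : ∑ i ∈ S \ T, x S i ≤ ∑ i ∈ S \ T, x (S ∪ T) i :=
    Finset.sum_le_sum fun i hi =>
      hmono S (S ∪ T) hUS hS i (Finset.sdiff_subset hi)
  have h2 : ∑ i ∈ T, x T i ≤ ∑ i ∈ T, x (S ∪ T) i :=
    Finset.sum_le_sum fun i hi => hmono T (S ∪ T) hUT hT i hi
  have hSdecomp : ∑ i ∈ S \ T, x S i + ∑ i ∈ S ∩ T, x S i = γ S := by
    rw [← heff S hS, ← Finset.sum_union (Finset.disjoint_sdiff_inter S T)]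
    congr 1
    exact Finset.sdiff_union_inter S T
  rw [← heff T hT]
  linarith
end

section
/- Let G = (V,E) be a finite simple graph with no isolated vertices and let u, v be adjacent vertices such that no edge in δ(u) ∪ δ(v) is pendant (equivalently, no vertex of G has {u} or {v} as its entire neighborhood, and u, v are not pendant) and |N(u,v)| ≤ 1, where N(u,v) = {w ∈ V : N(w) = {u,v}}. Then α(G[V⟨δ(u) ∪ δ(v)⟩]) = 1; that is, the induced subgraph on the set of vertices all of whose incident edges lie in δ(u) ∪ δ(v) is either a single edge or a triangle, so its maximum independent set has size one. -/
open Finset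

variable {V : Type*} [Fintype V] [DecidableEq V]

/-!
A vertex `x ∉ {u, v}` all of whose edges meet `u` or `v` has all its neighbours in `{u, v}`.
It has at least one neighbour, and if it had only one, the edge to it would be a pendant edge
in `δ(u) ∪ δ(v)`; so `N(x) = {u, v}`, i.e. `x ∈ N(u,v)`. Hence `V⟨δ(u) ∪ δ(v)⟩` lies in
`{u, v} ∪ N(u,v)`, which is a clique because `u ~ v` and `|N(u,v)| ≤ 1`, and it contains `u`.
-/

theorem alphaOn_eq_one_of_isClique {V : Type*} {G : SimpleGraph V} {U : Set V}
    (hne : U.Nonempty) (hU : G.IsClique U) : alphaOn G U = 1 := by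
  apply IsGreatest.csSup_eq
  constructor
  · obtain ⟨x, hx⟩ := hne
    refine ⟨{x}, by simpa using hx, ?_, Finset.card_singleton x⟩
    simp [Indep]
  · rintro n ⟨I, hIU, hI, rfl⟩
    refine Finset.card_le_one.mpr fun a ha b hb => ?_
    by_contra hab
    exact hI a ha b hb (hU (hIU ha) (hIU hb) hab)

theorem mem_incEdges_of_adj {V : Type*} {G : SimpleGraph V} {x y : V} (h : G.Adj x y) :
    s(x, y) ∈ incEdges G y :=
  ⟨h, Sym2.mem_mk_right x y⟩

theorem eq_or_eq_of_adj_of_mem_onlyInc {V : Type*} {G : SimpleGraph V} {u v x y : V}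
    (hx : x ∈ onlyInc G (incEdges G u ∪ incEdges G v)) (hxu : x ≠ u) (hxv : x ≠ v)
    (hxy : G.Adj x y) : y = u ∨ y = v := by
  rcases hx ⟨hxy, Sym2.mem_mk_left x y⟩ with ⟨-, hu⟩ | ⟨-, hv⟩
  · exact .inl ((Sym2.mem_iff.mp hu).resolve_left hxu.symm).symm
  · exact .inr ((Sym2.mem_iff.mp hv).resolve_left hxv.symm).symm

theorem adj_of_mem_onlyInc {V : Type*} [Fintype V] (G : SimpleGraph V) [DecidableRel G.Adj]
    {u v x : V}
    (hnp : ∀ e ∈ incEdges G u ∪ incEdges G v, ¬ PendantEdge G e) (hdeg : G.degree x ≠ 0)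
    (hx : x ∈ onlyInc G (incEdges G u ∪ incEdges G v)) (hxu : x ≠ u) (hxv : x ≠ v) :
    G.Adj x u := by
  by_contra hnot
  have hnbr : ∀ y, G.Adj x y → y = v := fun y hy =>
    (eq_or_eq_of_adj_of_mem_onlyInc hx hxu hxv hy).resolve_left (by rintro rfl; exact hnot hy)
  obtain ⟨y, hy⟩ := (G.degree_pos_iff_exists_adj x).mp (Nat.pos_of_ne_zero hdeg)
  have hxv' : G.Adj x v := hnbr y hy ▸ hy
  have hpendant : G.degree x = 1 :=
    SimpleGraph.degree_eq_one_iff_existsUnique_adj.mpr ⟨v, hxv', hnbr⟩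
  exact hnp _ (.inr (mem_incEdges_of_adj hxv')) ⟨hxv', x, Sym2.mem_mk_left x v, hpendant⟩

theorem neighborSet_eq_pair_of_mem_onlyInc {V : Type*} [Fintype V]
    (G : SimpleGraph V) [DecidableRel G.Adj]
    {u v x : V} (hnp : ∀ e ∈ incEdges G u ∪ incEdges G v, ¬ PendantEdge G e)
    (hdeg : G.degree x ≠ 0) (hx : x ∈ onlyInc G (incEdges G u ∪ incEdges G v))
    (hxu : x ≠ u) (hxv : x ≠ v) : G.neighborSet x = {u, v} := by
  have hxu' := adj_of_mem_onlyInc G hnp hdeg hx hxu hxv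
  have hxv' := adj_of_mem_onlyInc G (Set.union_comm (incEdges G u) _ ▸ hnp) hdeg
    (Set.union_comm (incEdges G u) _ ▸ hx) hxv hxu
  ext y
  exact ⟨eq_or_eq_of_adj_of_mem_onlyInc hx hxu hxv, by rintro (rfl | rfl) <;> assumption⟩

theorem isClique_insert_insert_setOf_neighborSet_eq {V : Type*} {G : SimpleGraph V} {u v : V}
    (huv : G.Adj u v) (hN : {w : V | G.neighborSet w = {u, v}}.Subsingleton) :
    G.IsClique (insert u (insert v {w : V | G.neighborSet w = {u, v}})) := by
  have hadj : ∀ w ∈ {w : V | G.neighborSet w = {u, v}}, G.Adj u w ∧ G.Adj v w := by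
    intro w hw
    have hw : G.neighborSet w = {u, v} := hw
    have hwu : u ∈ G.neighborSet w := hw ▸ Set.mem_insert u {v}
    have hwv : v ∈ G.neighborSet w := hw ▸ Set.mem_insert_of_mem u rfl
    exact ⟨G.adj_symm hwu, G.adj_symm hwv⟩
  refine SimpleGraph.isClique_insert.mpr ⟨SimpleGraph.isClique_insert.mpr
    ⟨.of_subsingleton hN, fun w hw _ => (hadj w hw).2⟩, ?_⟩
  rintro w (rfl | hw) _
  · exact huv
  · exact (hadj w hw).1

/-- Let `u, v` be adjacent vertices of a graph `G` with no
isolated vertices such that no edge in `δ(u) ∪ δ(v)` is pendant and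
`|N(u,v)| ≤ 1`, where `N(u,v) = {w : N(w) = {u,v}}`.  Then
`α(G[V⟨δ(u) ∪ δ(v)⟩]) = 1`. -/
theorem stmt_13 (G : SimpleGraph V) [DecidableRel G.Adj]
    (hiso : ∀ w : V, G.degree w ≠ 0)
    (u v : V) (huv : G.Adj u v)
    (hnp : ∀ e ∈ incEdges G u ∪ incEdges G v, ¬ PendantEdge G e)
    (hN : {w : V | G.neighborSet w = {u, v}}.Subsingleton) :
    alphaOn G (onlyInc G (incEdges G u ∪ incEdges G v)) = 1 := by
  have hsub : onlyInc G (incEdges G u ∪ incEdges G v) ⊆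
      insert u (insert v {w : V | G.neighborSet w = {u, v}}) := by
    intro x hx
    by_cases hxu : x = u
    · exact .inl hxu
    by_cases hxv : x = v
    · exact .inr (.inl hxv)
    exact .inr (.inr (neighborSet_eq_pair_of_mem_onlyInc G hnp (hiso x) hx hxu hxv))
  have hu : u ∈ onlyInc G (incEdges G u ∪ incEdges G v) := fun _ he => .inl he
  exact alphaOn_eq_one_of_isClique ⟨u, hu⟩
    ((isClique_insert_insert_setOf_neighborSet_eq huv hN).subset hsub)
end

section
/- Let G = (V,E) be a finite simple graph with no isolated vertices in which every vertex has distance at most two to a pendant vertex. If i is a non-pendant edge of type I (not incident to any pendant edge) with endpoints u and v, then N(u,v) = ∅, i.e., no vertex of G has neighborhood exactly {u,v}; consequently α(G[V⟨δ(u) ∪ δ(v)⟩]) = 1. -/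
open Finset

variable {V : Type*} [Fintype V] [DecidableEq V]

/-- In a graph `G` with no isolated vertices in which every
vertex has distance at most two to a pendant vertex, if `i = uv` is a non-pendant
edge of type I then `N(u,v) = ∅`; consequently `α(G[V⟨δ(u) ∪ δ(v)⟩]) = 1`. -/
theorem stmt_15 (G : SimpleGraph V) [DecidableRel G.Adj]
    (hiso : ∀ w : V, G.degree w ≠ 0)
    (hnear : ∀ w : V, NearPendant G w)
    (u v : V) (huv : G.Adj u v) (h1 : TypeI G s(u, v)) :
    {w : V | G.neighborSet w = {u, v}} = ∅ ∧
    alphaOn G (onlyInc G (incEdges G u ∪ incEdges G v)) = 1 := by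
  obtain ⟨he, hnp, hinc⟩ := h1
  have key : ∀ x z : V, (x = u ∨ x = v) → G.Adj x z → G.degree z ≠ 1 := by
    intro x z hx hadj hdeg
    exact hinc s(x, z) ⟨hadj, z, Sym2.mem_mk_right x z, hdeg⟩
      ⟨x, Sym2.mem_iff.mpr hx, Sym2.mem_mk_left x z⟩
  have part1 : {w : V | G.neighborSet w = {u, v}} = ∅ := by
    ext w
    simp only [Set.mem_setOf_eq, Set.mem_empty_iff_false, iff_false]
    intro hw
    have hwu : G.Adj w u := by
      rw [← SimpleGraph.mem_neighborSet, hw]; exact Set.mem_insert _ _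
    have hwv : G.Adj w v := by
      rw [← SimpleGraph.mem_neighborSet, hw]; exact Set.mem_insert_iff.mpr (Or.inr rfl)
    have hdw : G.degree w ≠ 1 := key u w (Or.inl rfl) hwu.symm
    obtain ⟨p, hp, wk, hlen⟩ := hnear w
    cases wk with
    | nil => exact hdw hp
    | cons h q =>
      rename_i x
      have hx : x = u ∨ x = v := by
        have : x ∈ G.neighborSet w := h
        rw [hw] at this
        simpa using this
      cases q with
      | nil => exact hnp ⟨he, p, Sym2.mem_iff.mpr hx, hp⟩
      | cons h' r =>
        cases r with
        | nil => exact key x _ hx h' hp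
        | cons h'' r' => simp [SimpleGraph.Walk.length_cons] at hlen
  refine ⟨part1, ?_⟩
  have honly : onlyInc G (incEdges G u ∪ incEdges G v) = {u, v} := by
    ext w
    constructor
    · intro hw
      by_contra hne
      have hnu : w ≠ u := fun h => hne (by rw [h]; exact Set.mem_insert _ _)
      have hnv : w ≠ v := fun h => hne (by rw [h]; exact Set.mem_insert_iff.mpr (Or.inr rfl))
      have hnb : ∀ z, G.Adj w z → z = u ∨ z = v := by
        intro z hz
        have hmem : s(w, z) ∈ incEdges G u ∪ incEdges G v :=
          hw ⟨hz, Sym2.mem_mk_left w z⟩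
        rcases hmem with h | h
        · rcases Sym2.mem_iff.mp h.2 with h' | h'
          · exact absurd h'.symm hnu
          · exact Or.inl h'.symm
        · rcases Sym2.mem_iff.mp h.2 with h' | h'
          · exact absurd h'.symm hnv
          · exact Or.inr h'.symm
      by_cases hu : G.Adj w u
      · by_cases hv : G.Adj w v
        · have : G.neighborSet w = {u, v} := by
            ext t
            simp only [SimpleGraph.mem_neighborSet, Set.mem_insert_iff, Set.mem_singleton_iff]
            constructor
            · exact hnb t
            · rintro (rfl | rfl) <;> assumption
          have : w ∈ {w : V | G.neighborSet w = {u, v}} := this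
          rw [part1] at this
          exact this
        · have hdeg : G.degree w = 1 := by
            have hfu : G.neighborFinset w = {u} := by
              ext t
              simp only [SimpleGraph.mem_neighborFinset, Finset.mem_singleton]
              constructor
              · intro ht
                rcases hnb t ht with rfl | rfl
                · rfl
                · exact absurd ht hv
              · rintro rfl; exact hu
            rw [SimpleGraph.degree, hfu, Finset.card_singleton]
          exact hinc s(w, u) ⟨hu, w, Sym2.mem_mk_left w u, hdeg⟩
            ⟨u, Sym2.mem_mk_left u v, Sym2.mem_mk_right w u⟩
      · by_cases hv : G.Adj w v
        · have hdeg : G.degree w = 1 := by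
            have hfv : G.neighborFinset w = {v} := by
              ext t
              simp only [SimpleGraph.mem_neighborFinset, Finset.mem_singleton]
              constructor
              · intro ht
                rcases hnb t ht with rfl | rfl
                · exact absurd ht hu
                · rfl
              · rintro rfl; exact hv
            rw [SimpleGraph.degree, hfv, Finset.card_singleton]
          exact hinc s(w, v) ⟨hv, w, Sym2.mem_mk_left w v, hdeg⟩
            ⟨v, Sym2.mem_mk_right u v, Sym2.mem_mk_right w v⟩
        · apply hiso w
          rw [SimpleGraph.degree, Finset.card_eq_zero]
          ext t
          simp only [SimpleGraph.mem_neighborFinset, Finset.notMem_empty, iff_false]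
          intro ht
          rcases hnb t ht with rfl | rfl
          · exact hu ht
          · exact hv ht
    · intro hw e heE
      rcases hw with rfl | rfl
      · exact Or.inl heE
      · exact Or.inr heE
  rw [honly]
  unfold alphaOn
  have hmem1 : (1 : ℕ) ∈ {n : ℕ | ∃ I : Finset V, ↑I ⊆ ({u, v} : Set V) ∧ Indep G I ∧ I.card = n} := by
    refine ⟨{u}, by simp, ?_, Finset.card_singleton u⟩
    intro a ha b hb
    simp only [Finset.mem_singleton] at ha hb
    subst ha; subst hb
    exact G.irrefl
  have hbound : ∀ n ∈ {n : ℕ | ∃ I : Finset V, ↑I ⊆ ({u, v} : Set V) ∧ Indep G I ∧ I.card = n}, n ≤ 1 := by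
    rintro n ⟨I, hsub, hind, rfl⟩
    by_contra hgt
    push_neg at hgt
    have hsub' : I ⊆ ({u, v} : Finset V) := by
      intro a ha
      have := hsub ha
      simpa using this
    have hcard2 : ({u, v} : Finset V).card ≤ I.card := by
      rw [Finset.card_insert_of_notMem (by simp [huv.ne]), Finset.card_singleton]
      omega
    have hIeq : I = {u, v} := Finset.eq_of_subset_of_card_le hsub' hcard2
    subst hIeq
    exact hind u (by simp) v (by simp) huv
  exact le_antisymm (csSup_le ⟨1, hmem1⟩ hbound) (le_csSup ⟨1, hbound⟩ hmem1)
end
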